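/- arXiv:2305.15950 — 6 statements merged into one kernel-verified Lean document; each statement's English description precedes it below -/
import Mathlib

section
/- For all sufficiently large real n, setting x = n / ln(n / ln n) satisfies n < x * ln x + x; hence x overestimates the solution of n = x + x ln x. -/
/-! With `L = log (n / log n)` one has `L ≤ log n`, so `x = n / L ≥ n / log n` and hence
`log x ≥ L`; then `n = x * L ≤ x * log x < x * log x + x`. -/

open Real

lemma lt_div_mul_log_div_add_div {n L : ℝ} (hn : 0 < n) (hL : 0 < L) (hle : L ≤ log (n / L)) :
    n < n / L * log (n / L) + n / L :=
  calc n = n / L * L := (div_mul_cancel₀ n hL.ne').symm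
    _ < n / L * (log (n / L) + 1) := by gcongr; linarith
    _ = n / L * log (n / L) + n / L := by ring

section LogDivLog

variable {n : ℝ}

lemma one_le_log_of_exp_one_le (hn : exp 1 ≤ n) : 1 ≤ log n :=
  (le_log_iff_exp_le ((exp_pos 1).trans_le hn)).2 hn

lemma log_div_log_pos (hn : exp 1 ≤ n) : 0 < log (n / log n) := by
  have hn0 : 0 < n := (exp_pos 1).trans_le hn
  have hlog : 0 < log n := one_pos.trans_le (one_le_log_of_exp_one_le hn)
  refine log_pos ((one_lt_div hlog).2 ?_)
  linarith [log_le_sub_one_of_pos hn0]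

lemma log_div_log_le_log (hn : exp 1 ≤ n) : log (n / log n) ≤ log n := by
  have hn0 : 0 < n := (exp_pos 1).trans_le hn
  have hlog : 1 ≤ log n := one_le_log_of_exp_one_le hn
  exact log_le_log (div_pos hn0 (one_pos.trans_le hlog)) (div_le_self hn0.le hlog)

end LogDivLog

theorem stmt_2 :
    ∃ N : ℝ, ∀ n : ℝ, N ≤ n →
      let x := n / Real.log (n / Real.log n)
      n < x * Real.log x + x := by
  refine ⟨exp 1, fun n hn => ?_⟩
  have hn0 : 0 < n := (exp_pos 1).trans_le hn
  have hL : 0 < log (n / log n) := log_div_log_pos hn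
  have hlog : 0 < log n := one_pos.trans_le (one_le_log_of_exp_one_le hn)
  have hx : n / log n ≤ n / log (n / log n) :=
    div_le_div_of_nonneg_left hn0.le hL (log_div_log_le_log hn)
  exact lt_div_mul_log_div_add_div hn0 hL (log_le_log (div_pos hn0 hlog) hx)
end

section
/- The number of ordered set partitions (weak orders) of an n-element set, i.e., the n-th ordered Bell number, satisfies OBN(n) ≤ n! / (ln 2)^(n+1) for all n ≥ 0. -/
/-- The ordered Bell numbers, defined by the recurrence
`OBN n = ∑_{k=1}^{n} (n choose k) * OBN (n - k)` with `OBN 0 = 1`. -/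
def OBN : ℕ → ℕ
  | 0 => 1
  | n + 1 =>
      ∑ k ∈ Finset.range (n + 1), Nat.choose (n + 1) (k + 1) * OBN (n - k)
  decreasing_by exact Nat.lt_succ_of_le (Nat.sub_le n k)

theorem stmt_5 (n : ℕ) :
    (OBN n : ℝ) ≤ (Nat.factorial n : ℝ) / (Real.log 2) ^ (n + 1) := by
  have hL : (0:ℝ) < Real.log 2 := Real.log_pos (by norm_num)
  induction n using Nat.strong_induction_on with
  | _ n ih =>
    match n with
    | 0 =>
      simp only [OBN, Nat.factorial, Nat.cast_one, pow_one]
      rw [zero_add, pow_one, le_div_iff₀ hL, one_mul]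
      have := Real.log_two_lt_d9
      linarith
    | Nat.succ n =>
      set L := Real.log 2 with hLdef
      have hsum : ∑ k ∈ Finset.range (n+1), L^(k+1)/(Nat.factorial (k+1)) ≤ 1 := by
        have h := Real.sum_le_exp_of_nonneg hL.le (n+2)
        rw [Finset.sum_range_succ'] at h
        rw [Real.exp_log (by norm_num : (0:ℝ) < 2)] at h
        simp only [pow_zero, Nat.factorial_zero, Nat.cast_one] at h
        linarith
      have hOBN : (OBN (n+1) : ℝ)
          = ∑ k ∈ Finset.range (n+1), (Nat.choose (n+1) (k+1) : ℝ) * OBN (n - k) := by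
        rw [OBN]
        push_cast
        rfl
      rw [hOBN]
      calc ∑ k ∈ Finset.range (n+1), (Nat.choose (n+1) (k+1) : ℝ) * OBN (n - k)
          ≤ ∑ k ∈ Finset.range (n+1), (Nat.choose (n+1) (k+1) : ℝ) *
              ((Nat.factorial (n-k) : ℝ) / L ^ (n-k+1)) := by
            apply Finset.sum_le_sum
            intro k hk
            have hk' : k < n + 1 := Finset.mem_range.mp hk
            have := ih (n - k) (by omega)
            exact mul_le_mul_of_nonneg_left this (by positivity)
        _ = ∑ k ∈ Finset.range (n+1),
              (Nat.factorial (n+1) : ℝ) / L ^ (n+2) * (L^(k+1)/(Nat.factorial (k+1))) := by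
            apply Finset.sum_congr rfl
            intro k hk
            have hk' : k ≤ n := by
              have := Finset.mem_range.mp hk; omega
            have hfac : (Nat.factorial (n+1) : ℝ)
                = (Nat.choose (n+1) (k+1) : ℝ) * Nat.factorial (k+1) * Nat.factorial (n-k) := by
              have := Nat.choose_mul_factorial_mul_factorial
                (Nat.succ_le_succ hk' : k + 1 ≤ n + 1)
              rw [show n + 1 - (k+1) = n - k from by omega] at this
              exact_mod_cast this.symm
            have hpow : L ^ (n+2) = L ^ (n-k+1) * L ^ (k+1) := by
              rw [← pow_add]; congr 1; omega
            have h1 : (Nat.factorial (k+1) : ℝ) ≠ 0 := by positivity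
            have h2 : (Nat.factorial (n-k) : ℝ) ≠ 0 := by positivity
            have h3 : L ≠ 0 := hL.ne'
            rw [hfac, hpow]
            field_simp
        _ = (Nat.factorial (n+1) : ℝ) / L ^ (n+2) *
              ∑ k ∈ Finset.range (n+1), L^(k+1)/(Nat.factorial (k+1)) := by
            rw [Finset.mul_sum]
        _ ≤ (Nat.factorial (n+1) : ℝ) / L ^ (n+2) * 1 := by
            apply mul_le_mul_of_nonneg_left hsum (by positivity)
        _ = (Nat.factorial (n+1) : ℝ) / L ^ (n+1+1) := by rw [mul_one]
end

section
/- For any finite set V of n points in the plane with distinct coordinates in each dimension, there exist linear orders T_x and T_y on V compatible with the x-coordinates and y-coordinates respectively (possibly after reflecting one or both axes), such that for every 0 ≤ k ≤ n, |Sub_k(T_x) ∩ Sub_k(T_y)| ≥ k − n/3, where Sub_k(T) denotes the first k elements of T. -/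
/-!
Sort `V` by `x` and by `y`; the two sortings give two complete flags `P k` (first `k` points by `x`)
and `Q k` (first `k` points by `y`), and reversing the `y`-order replaces `Q k` by `(Q (n - k))ᶜ`.
If neither choice works, there are `a` and `b` with `|P a \ Q a| > n/3` and `|P b ∩ Q (n - b)| > n/3`.
Then `Q a \ P a` and `(P b ∪ Q (n - b))ᶜ` are also larger than `n/3`, and depending on how `a`
compares with `b` and `n - b`, three of these four sets are pairwise disjoint, which is impossible.
-/

/-- The set of the first `k` elements of the linear order on `Fin n`
represented by the listing `T : Fin n ≃ Fin n`. -/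
def prefixSet {n : ℕ} (k : ℕ) (T : Fin n ≃ Fin n) : Finset (Fin n) :=
  (Finset.univ.filter fun i : Fin n => (i : ℕ) < k).image T

open Finset

section Flags

variable {α : Type*} [DecidableEq α]

lemma sub_div_three_le_card_inter {s t : Finset α} {k n : ℕ} (hs : #s = k)
    (h : 3 * #(s \ t) ≤ n) : (k : ℝ) - n / 3 ≤ #(s ∩ t) := by
  have hsum : ((#(s ∩ t) + #(s \ t) : ℕ) : ℝ) = k := by rw [card_inter_add_card_sdiff, hs]
  have h' : ((3 * #(s \ t) : ℕ) : ℝ) ≤ n := by exact_mod_cast h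
  push_cast at hsum h'
  linarith

variable [Fintype α]

lemma card_add_card_add_card_le_of_disjoint {s t u : Finset α} (hst : Disjoint s t)
    (hsu : Disjoint s u) (htu : Disjoint t u) : #s + #t + #u ≤ Fintype.card α := by
  rw [← card_union_of_disjoint hst, ← card_union_of_disjoint (disjoint_union_left.2 ⟨hsu, htu⟩)]
  exact card_le_univ _

theorem card_sdiff_le_or_card_inter_le {P Q : ℕ → Finset α} (hP : Monotone P) (hQ : Monotone Q)
    (hPc : ∀ k ≤ Fintype.card α, #(P k) = k) (hQc : ∀ k ≤ Fintype.card α, #(Q k) = k) :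
    (∀ k ≤ Fintype.card α, 3 * #(P k \ Q k) ≤ Fintype.card α) ∨
      ∀ k ≤ Fintype.card α, 3 * #(P k ∩ Q (Fintype.card α - k)) ≤ Fintype.card α := by
  set n := Fintype.card α
  by_contra! ⟨⟨a, ha, hA1⟩, ⟨b, hb, hB1⟩⟩
  set c := n - b
  have hA2 : n < 3 * #(Q a \ P a) := by
    rwa [← card_sdiff_comm ((hPc a ha).trans (hQc a ha).symm)]
  have hB2 : n < 3 * #(P b ∪ Q c)ᶜ := by
    have hunion := card_union_add_card_inter (P b) (Q c)
    rw [hPc b hb, hQc c (Nat.sub_le n b)] at hunion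
    rw [card_compl]
    omega
  have hA12 : Disjoint (P a \ Q a) (Q a \ P a) := disjoint_sdiff_sdiff
  have hA1B1 (h : c ≤ a) : Disjoint (P a \ Q a) (P b ∩ Q c) :=
    disjoint_sdiff_self_left.mono_right (inter_subset_right.trans (hQ h))
  have hA1B2 (h : a ≤ b) : Disjoint (P a \ Q a) (P b ∪ Q c)ᶜ :=
    disjoint_compl_right.mono (sdiff_subset.trans (hP h)) (compl_subset_compl.2 subset_union_left)
  have hA2B1 (h : b ≤ a) : Disjoint (Q a \ P a) (P b ∩ Q c) :=
    disjoint_sdiff_self_left.mono_right (inter_subset_left.trans (hP h))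
  have hA2B2 (h : a ≤ c) : Disjoint (Q a \ P a) (P b ∪ Q c)ᶜ :=
    disjoint_compl_right.mono (sdiff_subset.trans (hQ h)) (compl_subset_compl.2 subset_union_right)
  have hB12 : Disjoint (P b ∩ Q c) (P b ∪ Q c)ᶜ := disjoint_compl_right.mono_left inter_subset_union
  rcases le_total a b with hab | hba <;> rcases le_total a c with hac | hca
  · have := card_add_card_add_card_le_of_disjoint hA12 (hA1B2 hab) (hA2B2 hac); omega
  · have := card_add_card_add_card_le_of_disjoint (hA1B1 hca) (hA1B2 hab) hB12; omega
  · have := card_add_card_add_card_le_of_disjoint (hA2B1 hba) (hA2B2 hac) hB12; omega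
  · have := card_add_card_add_card_le_of_disjoint hA12 (hA1B1 hca) (hA2B1 hba); omega

end Flags

section PrefixSet

variable {n : ℕ}

lemma mem_prefixSet {k : ℕ} {T : Fin n ≃ Fin n} {p : Fin n} :
    p ∈ prefixSet k T ↔ (T.symm p : ℕ) < k := by
  simp only [prefixSet, mem_image, mem_filter, mem_univ, true_and]
  exact ⟨by rintro ⟨i, hi, rfl⟩; simpa using hi, fun h => ⟨T.symm p, h, T.apply_symm_apply p⟩⟩

lemma monotone_prefixSet (T : Fin n ≃ Fin n) : Monotone fun k => prefixSet k T :=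
  fun _ _ hkl _ hp => mem_prefixSet.2 ((mem_prefixSet.1 hp).trans_le hkl)

lemma card_prefixSet (T : Fin n ≃ Fin n) {k : ℕ} (hk : k ≤ n) : #(prefixSet k T) = k := by
  rw [prefixSet, card_image_of_injective _ T.injective]
  rcases hk.lt_or_eq with hk | rfl
  · rw [show univ.filter (fun i : Fin n => (i : ℕ) < k) = Iio ⟨k, hk⟩ by ext; simp [Fin.lt_def],
      Fin.card_Iio]
  · simp

lemma prefixSet_revPerm_trans (T : Fin n ≃ Fin n) (k : ℕ) :
    prefixSet k (Fin.revPerm.trans T) = (prefixSet (n - k) T)ᶜ := by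
  ext p
  have := (T.symm p).isLt
  simp only [mem_compl, mem_prefixSet, Equiv.symm_trans_apply, Fin.revPerm_symm,
    Fin.revPerm_apply, Fin.val_rev]
  omega

end PrefixSet

lemma strictMono_comp_sort {n : ℕ} {β : Type*} [LinearOrder β] {f : Fin n → β}
    (hf : Function.Injective f) : StrictMono (f ∘ Tuple.sort f) :=
  (Tuple.monotone_sort f).strictMono_of_injective (hf.comp (Tuple.sort f).injective)

theorem stmt_8 (n : ℕ) (V : Fin n → ℝ × ℝ)
    (hx : ∀ i j : Fin n, i ≠ j → (V i).1 ≠ (V j).1)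
    (hy : ∀ i j : Fin n, i ≠ j → (V i).2 ≠ (V j).2) :
    ∃ Tx Ty : Fin n ≃ Fin n,
      ((∀ i j : Fin n, i < j → (V (Tx i)).1 < (V (Tx j)).1) ∨
        (∀ i j : Fin n, i < j → (V (Tx j)).1 < (V (Tx i)).1)) ∧
      ((∀ i j : Fin n, i < j → (V (Ty i)).2 < (V (Ty j)).2) ∨
        (∀ i j : Fin n, i < j → (V (Ty j)).2 < (V (Ty i)).2)) ∧
      ∀ k : ℕ, k ≤ n →
        ((k : ℝ) - (n : ℝ) / 3) ≤ ((prefixSet k Tx ∩ prefixSet k Ty).card : ℝ) := by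
  set Tx := Tuple.sort fun i => (V i).1
  set Ty := Tuple.sort fun i => (V i).2
  have hTx := strictMono_comp_sort fun i j h => by_contra fun hij => hx i j hij h
  have hTy := strictMono_comp_sort fun i j h => by_contra fun hij => hy i j hij h
  have hcard (T : Fin n ≃ Fin n) : ∀ k ≤ Fintype.card (Fin n), #(prefixSet k T) = k :=
    fun k hk => card_prefixSet T (hk.trans_eq (Fintype.card_fin n))
  rcases card_sdiff_le_or_card_inter_le (monotone_prefixSet Tx) (monotone_prefixSet Ty)
    (hcard Tx) (hcard Ty) with h | h <;> rw [Fintype.card_fin] at h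
  · exact ⟨Tx, Ty, .inl fun _ _ hij => hTx hij, .inl fun _ _ hij => hTy hij,
      fun k hk => sub_div_three_le_card_inter (card_prefixSet Tx hk) (h k hk)⟩
  · refine ⟨Tx, Fin.revPerm.trans Ty, .inl fun _ _ hij => hTx hij,
      .inr fun _ _ hij => hTy (Fin.rev_strictAnti hij), fun k hk => ?_⟩
    rw [prefixSet_revPerm_trans]
    exact sub_div_three_le_card_inter (card_prefixSet Tx hk) (by rw [sdiff_compl]; exact h k hk)
end

section
/- For every natural number n ≥ 1, the maximum over 0 ≤ m ≤ n of (n-m)^m is at most (n / ln(n/ln n))^n for all sufficiently large n. -/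
/-!
Write `k = n - m` and `L = log (n / log n)`. If `log k < L` the bound is immediate from
`L ≤ log (n / L)`. Otherwise `log t ≤ t - 1` at `t = k L / n` gives `n log (k L / n) ≤ k L ≤ k log k`,
which rearranges to `m log k ≤ n log (n / L)`.
-/

open Real

lemma sub_mul_log_le_mul_log_div {n k L : ℝ} (hn : 0 < n) (hk : 0 < k) (hL : 0 < L)
    (hLk : L ≤ log k) : (n - k) * log k ≤ n * log (n / L) := by
  have hlog : log (k * L / n) ≤ k * L / n - 1 := log_le_sub_one_of_pos (by positivity)
  rw [log_div (by positivity) hn.ne', log_mul hk.ne' hL.ne'] at hlog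
  have hscaled : n * (log k + log L - log n) ≤ k * L - n := by
    have := mul_le_mul_of_nonneg_left hlog hn.le
    rwa [mul_sub n (k * L / n), mul_div_cancel₀ _ hn.ne', mul_one] at this
  rw [log_div hn.ne' hL.ne']
  nlinarith [mul_le_mul_of_nonneg_left hLk hk.le]

lemma log_div_log_pos_s11 {x : ℝ} (hx : 1 < x) : 0 < log (x / log x) := by
  have hlog_pos : 0 < log x := log_pos hx
  have hlog_lt : log x < x := by linarith [log_le_sub_one_of_pos (by linarith : 0 < x)]
  exact log_pos ((one_lt_div hlog_pos).2 hlog_lt)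

lemma log_div_log_le_log_s11 {x : ℝ} (hx : 0 < x) (hlog : 1 ≤ log x) :
    log (x / log x) ≤ log x :=
  log_le_log (div_pos hx (by linarith)) (div_le_self hx.le hlog)

lemma mul_log_le_mul_log_div_log_div_log {n k m : ℝ} (hlog : 1 ≤ log n) (hk : 1 ≤ k)
    (hm : 0 ≤ m) (hmk : m + k = n) : m * log k ≤ n * log (n / log (n / log n)) := by
  have hn : 0 < n := by linarith
  set L := log (n / log n)
  have hL : 0 < L := log_div_log_pos_s11 ((log_pos_iff hn.le).1 (by linarith))
  have hL_le_log : L ≤ log n := log_div_log_le_log_s11 hn hlog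
  -- `L = log (n / log n) ≤ log (n / L)` precisely because `L ≤ log n`.
  have hL_le_logR : L ≤ log (n / L) :=
    log_le_log (by positivity) (div_le_div_of_nonneg_left hn.le hL hL_le_log)
  rcases le_or_gt L (log k) with hLk | hkL
  · rw [show m = n - k by linarith]
    exact sub_mul_log_le_mul_log_div hn (by linarith) hL hLk
  · calc m * log k ≤ n * L :=
          mul_le_mul (by linarith) hkL.le (log_nonneg hk) hn.le
      _ ≤ n * log (n / L) := mul_le_mul_of_nonneg_left hL_le_logR hn.le

lemma one_le_log_of_three_le {x : ℝ} (hx : 3 ≤ x) : 1 ≤ log x := by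
  rw [le_log_iff_exp_le (by linarith)]
  linarith [exp_one_lt_d9]

lemma cast_sub_pow_le {n m : ℕ} (hn : 3 ≤ n) (hm : m ≤ n) :
    (((n - m) ^ m : ℕ) : ℝ) ≤ ((n : ℝ) / log ((n : ℝ) / log n)) ^ n := by
  have hn' : (3 : ℝ) ≤ n := by exact_mod_cast hn
  have hR : 0 < (n : ℝ) / log ((n : ℝ) / log n) :=
    div_pos (by linarith) (log_div_log_pos_s11 (by linarith))
  rcases hm.lt_or_eq with hlt | hmn
  · have hk : (1 : ℝ) ≤ n - m := by
      have : (m : ℝ) + 1 ≤ n := by exact_mod_cast hlt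
      linarith
    push_cast [Nat.cast_sub hm]
    rw [← log_le_log_iff (pow_pos (by linarith) m) (pow_pos hR n), log_pow, log_pow]
    exact mul_log_le_mul_log_div_log_div_log (one_le_log_of_three_le hn') hk
      (Nat.cast_nonneg m) (by ring)
  · rw [hmn, Nat.sub_self, zero_pow (by omega), Nat.cast_zero]
    exact pow_nonneg hR.le n

theorem stmt_11 :
    ∃ N : ℕ, ∀ n : ℕ, N ≤ n → 1 ≤ n →
      (((Finset.range (n + 1)).sup (fun m => (n - m) ^ m) : ℕ) : ℝ) ≤
        ((n : ℝ) / Real.log ((n : ℝ) / Real.log n)) ^ n := by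
  refine ⟨3, fun n hn _ => ?_⟩
  obtain ⟨m, hm, hsup⟩ := Finset.exists_mem_eq_sup (Finset.range (n + 1))
    Finset.nonempty_range_add_one (fun m => (n - m) ^ m)
  rw [hsup]
  exact cast_sub_pow_le hn (Nat.lt_succ_iff.mp (Finset.mem_range.mp hm))
end

section
/- An instance of the cardinal direction point algebra with variable set V and binary constraints C is satisfiable if and only if there exist two functions g_x, g_y : V → {1,…,|V|} such that for every constraint c(u,v) ∈ C there is a pair (⊙_x, ⊙_y) ∈ c with g_x(u) ⊙_x g_x(v) and g_y(u) ⊙_y g_y(v). -/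
namespace Stmt16

/-- `holds o a b` means the point relation denoted by `o ∈ {<,=,>}` holds
between `a` and `b`. -/
def holds {β : Type*} [LT β] (o : Ordering) (a b : β) : Prop :=
  match o with
  | .lt => a < b
  | .eq => a = b
  | .gt => b < a

lemma rank_spec {V : Type*} [Fintype V] (h : V → ℝ) :
    ∃ r : V → ℕ, (∀ v, r v ∈ Finset.Icc 1 (Fintype.card V)) ∧
      ∀ u v, (h u < h v ↔ r u < r v) ∧ (h u = h v ↔ r u = r v) := by
  classical
  set r : V → ℕ := fun v => ((Finset.univ.image h).filter (fun x => x ≤ h v)).card with hr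
  have mono : ∀ u v : V, h u < h v → r u < r v := by
    intro u v huv
    apply Finset.card_lt_card
    constructor
    · exact Finset.monotone_filter_right _ (fun x _ hx => le_trans hx huv.le)
    · intro hsub
      have : h v ∈ (Finset.univ.image h).filter (fun x => x ≤ h u) :=
        hsub (by simp)
      simp at this
      exact absurd this (not_le.mpr huv)
  have iff_lt : ∀ u v : V, h u < h v ↔ r u < r v := by
    intro u v
    refine ⟨mono u v, fun hlt => ?_⟩
    rcases lt_trichotomy (h u) (h v) with h1 | h1 | h1
    · exact h1
    · simp [hr, h1] at hlt
    · exact absurd (mono v u h1) (by omega)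
  refine ⟨r, fun v => ?_, fun u v => ⟨iff_lt u v, ?_⟩⟩
  · simp only [Finset.mem_Icc]
    constructor
    · have : h v ∈ (Finset.univ.image h).filter (fun x => x ≤ h v) := by simp
      exact Finset.card_pos.mpr ⟨_, this⟩
    · calc r v ≤ (Finset.univ.image h).card := Finset.card_filter_le _ _
        _ ≤ Finset.univ.card := Finset.card_image_le
        _ = Fintype.card V := rfl
  · constructor
    · intro e; simp [hr, e]
    · intro e
      rcases lt_trichotomy (h u) (h v) with h1 | h1 | h1
      · exact absurd ((iff_lt u v).mp h1) (by omega)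
      · exact h1
      · exact absurd ((iff_lt v u).mp h1) (by omega)

lemma holds_cast (o : Ordering) (a b : ℕ) (h : holds o a b) :
    holds o (a : ℝ) (b : ℝ) := by
  cases o <;> simp only [holds] at h ⊢ <;> exact_mod_cast h

lemma holds_rank {V : Type*} [Fintype V] (h : V → ℝ) (r : V → ℕ)
    (hspec : ∀ u v, (h u < h v ↔ r u < r v) ∧ (h u = h v ↔ r u = r v))
    (o : Ordering) (u v : V) : holds o (h u) (h v) ↔ holds o (r u) (r v) := by
  cases o with
  | lt => exact (hspec u v).1
  | eq => exact (hspec u v).2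
  | gt => exact (hspec v u).1

theorem stmt_16 {V : Type*} [Fintype V]
    (C : Set (V × V × Set (Ordering × Ordering))) :
    (∃ f : V → ℝ × ℝ, ∀ p ∈ C, ∃ o ∈ p.2.2,
        holds o.1 (f p.1).1 (f p.2.1).1 ∧ holds o.2 (f p.1).2 (f p.2.1).2) ↔
    (∃ gx gy : V → ℕ,
        (∀ v, gx v ∈ Finset.Icc 1 (Fintype.card V)) ∧
        (∀ v, gy v ∈ Finset.Icc 1 (Fintype.card V)) ∧
        ∀ p ∈ C, ∃ o ∈ p.2.2,
          holds o.1 (gx p.1) (gx p.2.1) ∧ holds o.2 (gy p.1) (gy p.2.1)) := by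
  constructor
  · rintro ⟨f, hf⟩
    obtain ⟨gx, hgx, hxspec⟩ := rank_spec (fun v => (f v).1)
    obtain ⟨gy, hgy, hyspec⟩ := rank_spec (fun v => (f v).2)
    refine ⟨gx, gy, hgx, hgy, fun p hp => ?_⟩
    obtain ⟨o, ho, h1, h2⟩ := hf p hp
    exact ⟨o, ho, (holds_rank _ gx hxspec o.1 p.1 p.2.1).mp h1,
      (holds_rank _ gy hyspec o.2 p.1 p.2.1).mp h2⟩
  · rintro ⟨gx, gy, _, _, hg⟩
    refine ⟨fun v => ((gx v : ℝ), (gy v : ℝ)), fun p hp => ?_⟩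
    obtain ⟨o, ho, h1, h2⟩ := hg p hp
    exact ⟨o, ho, holds_cast o.1 _ _ h1, holds_cast o.2 _ _ h2⟩

end Stmt16
end

section
/- Suppose g : {0,…,n} → ℝ is defined by g(m) = (n−m)^m (with 0^0 = 1). Then for every m, g(m) ≤ (n / ln(n/ln n))^(n) holds whenever n ≥ N for some absolute constant N; moreover the maximizing m satisfies n − m ≤ n / ln(n/ln n). -/
open Real

-- auxiliary: for t ≥ 400, log t * (log t + 1) ≤ t
lemma stmt_19_aux (t : ℝ) (ht : 400 ≤ t) : Real.log t * (Real.log t + 1) ≤ t := by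
  have ht0 : (0:ℝ) < t := by linarith
  set s := t ^ (1/4 : ℝ) with hs
  have hs0 : (0:ℝ) ≤ s := Real.rpow_nonneg ht0.le _
  have hs4 : s ^ 4 = t := by
    rw [hs, ← Real.rpow_natCast (t ^ (1/4:ℝ)) 4, ← Real.rpow_mul ht0.le]
    norm_num
  have hsge : (4.4:ℝ) ≤ s := by
    by_contra h
    push_neg at h
    have := pow_lt_pow_left₀ h hs0 (n := 4) (by norm_num)
    rw [hs4] at this
    norm_num at this
    linarith
  have hlogt : Real.log t ≤ 4 * s - 4 := by
    have h1 : Real.log s ≤ s - 1 := Real.log_le_sub_one_of_pos (by linarith)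
    have h2 : Real.log t = 4 * Real.log s := by
      rw [hs, Real.log_rpow ht0]; ring
    linarith
  have hlp : 0 < Real.log t := Real.log_pos (by linarith)
  nlinarith [sq_nonneg s, sq_nonneg (s*s - 16), mul_nonneg hs0 hs0, sq_nonneg (s - 4.4)]

set_option maxHeartbeats 2000000 in
theorem stmt_19 :
    ∃ N : ℕ, ∀ n : ℕ, N ≤ n →
      (n : ℝ) / Real.log n > Real.exp 1 →
      (∀ m ≤ n, (((n - m) ^ m : ℕ) : ℝ) ≤
          ((n : ℝ) / Real.log ((n : ℝ) / Real.log n)) ^ (n : ℕ)) ∧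
      (∀ m ≤ n, (∀ m' ≤ n, (n - m') ^ m' ≤ (n - m) ^ m) →
          ((n : ℝ) - m ≤ (n : ℝ) / Real.log ((n : ℝ) / Real.log n))) := by
  use 400
  intro n hn hlog
  have hnR : (400:ℝ) ≤ (n:ℝ) := by exact_mod_cast hn
  have hn0 : (0:ℝ) < n := by linarith
  have hlogn_pos : 0 < Real.log n := Real.log_pos (by linarith)
  have hed : Real.exp 1 < 2.7182818286 := Real.exp_one_lt_d9
  have hed2 : (2.7182818283:ℝ) < Real.exp 1 := Real.exp_one_gt_d9
  set A := (n:ℝ) / Real.log n with hA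
  have hAe : Real.exp 1 < A := hlog
  have hA1 : (1:ℝ) < A := by linarith
  have hA0 : (0:ℝ) < A := by linarith
  have hlogn1 : 1 ≤ Real.log n := by
    have h1 : Real.exp 1 ≤ (n:ℝ) := by linarith
    calc (1:ℝ) = Real.log (Real.exp 1) := (Real.log_exp 1).symm
    _ ≤ Real.log n := Real.log_le_log (Real.exp_pos _) h1
  set L := Real.log A with hL
  have hL1 : 1 < L := by
    have h := Real.log_lt_log (Real.exp_pos 1) hAe
    rwa [Real.log_exp] at h
  have hL0 : 0 < L := by linarith
  have hAn : A ≤ (n:ℝ) := by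
    rw [hA, div_le_iff₀ hlogn_pos]
    nlinarith
  have hLlogn : L ≤ Real.log n := Real.log_le_log hA0 hAn
  set x := (n:ℝ) / L with hx
  have hxA : A ≤ x := by
    rw [hA, hx]
    apply div_le_div_of_nonneg_left hn0.le hL0 hLlogn
  have hx1 : (1:ℝ) < x := lt_of_lt_of_le hA1 hxA
  have hx0 : (0:ℝ) < x := by linarith
  have hxe : Real.exp 1 < x := lt_of_lt_of_le hAe hxA
  have hn_eq : (n:ℝ) = x * L := by
    rw [hx]; field_simp
  have hlogx : L ≤ Real.log x := by
    rw [hL]; exact Real.log_le_log hA0 hxA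
  have hkey : Real.log n + 1 ≤ A := by
    rw [hA, le_div_iff₀ hlogn_pos]
    have := stmt_19_aux n hnR
    nlinarith
  have hxL1 : L + 1 ≤ x := by
    have : L + 1 ≤ Real.log n + 1 := by linarith
    linarith
  constructor
  · -- Part 1
    intro m hm
    rcases Nat.eq_zero_or_pos m with hm0 | hmpos
    · subst hm0
      simp only [Nat.sub_zero, pow_zero, Nat.cast_one]
      exact one_le_pow₀ hx1.le
    rcases Nat.eq_zero_or_pos (n - m) with hy0 | hypos
    · rw [hy0, zero_pow (by omega : m ≠ 0)]
      norm_num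
      positivity
    · have hy1 : (1:ℝ) ≤ ((n - m : ℕ) : ℝ) := by exact_mod_cast hypos
      set y : ℝ := ((n - m : ℕ) : ℝ) with hy
      have hyn : y = (n:ℝ) - m := by
        rw [hy, Nat.cast_sub hm]
      have hy0' : (0:ℝ) < y := by linarith
      push_cast
      rw [← Real.exp_log (pow_pos hy0' m), ← Real.exp_log (pow_pos hx0 n),
        Real.exp_le_exp, Real.log_pow, Real.log_pow]
      have hlogy0 : 0 ≤ Real.log y := Real.log_nonneg hy1
      have hmn : (m:ℝ) ≤ n := Nat.cast_le.mpr hm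
      rcases le_or_gt y x with hcase | hcase
      · have h1 : Real.log y ≤ Real.log x := Real.log_le_log hy0' hcase
        nlinarith
      · have hLy : L ≤ Real.log y := le_trans hlogx (Real.log_le_log hx0 hcase.le)
        have hsub : Real.log y - Real.log x ≤ y / x - 1 := by
          have h := Real.log_le_sub_one_of_pos (show (0:ℝ) < y/x by positivity)
          rwa [Real.log_div (by linarith) (ne_of_gt hx0)] at h
        have hyx : (n:ℝ) * (y / x) = L * y := by
          rw [hn_eq]; field_simp
        have h1 : (n:ℝ) * Real.log y ≤ n * Real.log x + L * y - n := by
          have h2 := mul_le_mul_of_nonneg_left hsub hn0.le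
          have h3 : (n:ℝ) * (y/x - 1) = L*y - n := by
            rw [mul_sub, hyx]; ring
          nlinarith
        have h3 : L * y ≤ y * Real.log y := by
          rw [mul_comm]
          exact mul_le_mul_of_nonneg_left hLy (by linarith)
        have hmy : (m:ℝ) = (n:ℝ) - y := by rw [hyn]; ring
        rw [hmy]
        nlinarith
  · -- Part 2
    intro m hm hmax
    by_contra hcon
    push_neg at hcon
    set y : ℝ := (n:ℝ) - m with hy
    have hyx : x < y := hcon
    have hyR : ((n - m : ℕ) : ℝ) = y := by
      rw [hy, Nat.cast_sub hm]
    have hxbig : (2.7:ℝ) < x := by linarith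
    have hy3 : 3 ≤ n - m := by
      by_contra h
      push_neg at h
      have h2 : ((n - m : ℕ) : ℝ) ≤ 2 := by exact_mod_cast (by omega : n - m ≤ 2)
      rw [hyR] at h2
      linarith
    rcases Nat.eq_zero_or_pos m with hm0 | hmpos
    · subst hm0
      have h1 := hmax 1 (by omega)
      simp at h1
      omega
    · have hm1n : m + 1 ≤ n := by omega
      have h1 := hmax (m+1) hm1n
      have hcast : ((n - (m+1) : ℕ) : ℝ) = y - 1 := by
        rw [Nat.cast_sub hm1n, hy]
        push_cast
        ring
      have h1R : (y - 1) ^ (m+1) ≤ y ^ m := by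
        have := (Nat.cast_le (α := ℝ)).mpr h1
        rwa [Nat.cast_pow, Nat.cast_pow, hcast, hyR] at this
      -- derive contradiction: y ^ m < (y-1) ^ (m+1)
      have hyRe : (2.7:ℝ) < y := by linarith
      have hy1' : (1.7:ℝ) < y - 1 := by linarith
      have hmpos' : (0:ℝ) < m := by exact_mod_cast hmpos
      -- log step inequality (strict)
      have hlogstep : Real.log y - Real.log (y-1) < 1/(y-1) := by
        have hne : y/(y-1) ≠ 1 := by
          intro h
          rw [div_eq_one_iff_eq (by linarith : y - 1 ≠ 0)] at h
          linarith
        have h := Real.log_lt_sub_one_of_pos (show (0:ℝ) < y/(y-1) by positivity) hne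
        rw [Real.log_div (by linarith) (by linarith)] at h
        have : y/(y-1) - 1 = 1/(y-1) := by field_simp; ring
        linarith
      -- m < (y-1) log(y-1)
      have hmbound : (m:ℝ) < (y-1) * Real.log (y-1) := by
        have hx1' : (0:ℝ) < x - 1 := by linarith
        -- log x - log(x-1) ≤ 1/(x-1)
        have hls : Real.log x - Real.log (x-1) ≤ 1/(x-1) := by
          have h := Real.log_le_sub_one_of_pos (show (0:ℝ) < x/(x-1) by positivity)
          rw [Real.log_div (by linarith) (by linarith)] at h
          have : x/(x-1) - 1 = 1/(x-1) := by field_simp; ring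
          linarith
        have h5 : (x-1)*L - 1 ≤ (x-1)*Real.log (x-1) := by
          have h6 : L - 1/(x-1) ≤ Real.log (x-1) := by linarith [hlogx]
          have h7 := mul_le_mul_of_nonneg_left h6 hx1'.le
          have h8 : (x-1) * (L - 1/(x-1)) = (x-1)*L - 1 := by
            field_simp
          linarith
        have h7 : (x-1)*Real.log (x-1) ≤ (y-1)*Real.log (y-1) := by
          have hlx10 : 0 ≤ Real.log (x-1) := Real.log_nonneg (by linarith)
          have hlxy : Real.log (x-1) ≤ Real.log (y-1) := Real.log_le_log (by linarith) (by linarith)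
          have : (0:ℝ) ≤ x - 1 := hx1'.le
          nlinarith
        -- m = n - y < n - x = x*L - x ≤ (x-1)*L - 1 ≤ ...
        have hmval : (m:ℝ) = (n:ℝ) - y := by rw [hy]; ring
        have hnx : (n:ℝ) - x = x*(L-1) := by rw [hn_eq]; ring
        have h6' : x*(L-1) ≤ (x-1)*L - 1 := by
          have : (x-1)*L - 1 - x*(L-1) = x - L - 1 := by ring
          linarith
        linarith [hmval, hnx, hyx, h6', h5, h7]
      -- combine: m log y < (m+1) log (y-1)
      have hcomb : (m:ℝ) * Real.log y < ((m:ℝ)+1) * Real.log (y-1) := by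
        have s1 : (m:ℝ) * (Real.log y - Real.log (y-1)) < m * (1/(y-1)) :=
          mul_lt_mul_of_pos_left hlogstep hmpos'
        have s2 : (m:ℝ) * (1/(y-1)) < Real.log (y-1) := by
          rw [mul_one_div, div_lt_iff₀ (by linarith : (0:ℝ) < y - 1)]
          linarith [hmbound, (by ring : (y-1) * Real.log (y-1) = Real.log (y-1) * (y-1))]
        have e1 : (m:ℝ)*Real.log y = m*Real.log (y-1) + m*(Real.log y - Real.log (y-1)) := by ring
        have e2 : ((m:ℝ)+1)*Real.log (y-1) = m*Real.log (y-1) + Real.log (y-1) := by ring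
        linarith
      have hfin : y ^ m < (y-1) ^ (m+1) := by
        rw [← Real.exp_log (pow_pos (by linarith : (0:ℝ) < y) m),
          ← Real.exp_log (pow_pos (by linarith : (0:ℝ) < y - 1) (m+1)),
          Real.exp_lt_exp, Real.log_pow, Real.log_pow]
        push_cast
        exact hcomb
      linarith
end
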